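/- arXiv:1304.1762 — 6 statements merged into one kernel-verified Lean document; each statement's English description precedes it below -/
import Mathlib

section
/- Let α > 0. Then for every t ∈ ℝ with t not of the form kπ + π/2 (k ∈ ℤ) and tan t defined, there exists y ∈ ℝ with |y| < (π/2)·α such that (1+α)·tan t = tan(t+y). -/
open Real

lemma abs_arctan_le_abs (z : ℝ) : |Real.arctan z| ≤ |z| := by
  have nonneg : ∀ w : ℝ, 0 ≤ w → 0 ≤ Real.arctan w := by
    intro w hw
    simpa [Real.arctan_zero] using Real.arctan_strictMono.monotone hw
  have key : ∀ w : ℝ, 0 ≤ w → Real.arctan w ≤ w := by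
    intro w hw
    have h1 : Real.arctan w < π / 2 := Real.arctan_lt_pi_div_two w
    have h2 : 0 ≤ Real.arctan w := nonneg w hw
    calc Real.arctan w ≤ Real.tan (Real.arctan w) := Real.le_tan h2 h1
      _ = w := Real.tan_arctan w
  rcases le_or_gt 0 z with hz | hz
  · rw [abs_of_nonneg (nonneg z hz), abs_of_nonneg hz]
    exact key z hz
  · have hneg : Real.arctan z < 0 := by
      simpa [Real.arctan_zero] using Real.arctan_strictMono hz
    rw [abs_of_neg hz, abs_of_neg hneg]
    have := key (-z) (by linarith)
    rw [Real.arctan_neg] at this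
    linarith

/-- For α > 0 and t in the domain of tan, there is y with
|y| < (π/2)·α, t+y in the domain of tan, and (1+α)·tan t = tan(t+y). -/
theorem tan_scale_shift (α : ℝ) (hα : 0 < α) (t : ℝ)
    (ht : ∀ k : ℤ, t ≠ k * π + π / 2) :
    ∃ y : ℝ, |y| < π / 2 * α ∧ (∀ k : ℤ, t + y ≠ k * π + π / 2) ∧
      (1 + α) * Real.tan t = Real.tan (t + y) := by
  have hπ : 0 < π := Real.pi_pos
  set k : ℤ := ⌊t / π + 1 / 2⌋ with hk
  set s : ℝ := t - k * π with hs
  have hfl : (k : ℝ) ≤ t / π + 1 / 2 := Int.floor_le _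
  have hfl2 : t / π + 1 / 2 < k + 1 := Int.lt_floor_add_one _
  have hs_lt : s < π / 2 := by
    have h1 : t / π < (k : ℝ) + 1 / 2 := by linarith
    have := (div_lt_iff₀ hπ).mp h1
    simp only [hs]; nlinarith
  have hs_ge : -(π / 2) ≤ s := by
    have h1 : (k : ℝ) - 1 / 2 ≤ t / π := by linarith
    have := (le_div_iff₀ hπ).mp h1
    simp only [hs]; nlinarith
  have hs_ne : s ≠ -(π / 2) := by
    intro h
    apply ht (k - 1)
    push_cast
    simp only [hs] at h
    linarith
  have hs_gt : -(π / 2) < s := lt_of_le_of_ne hs_ge hs_ne.symm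
  have hts : Real.tan t = Real.tan s := by
    simpa [hs] using (Real.tan_periodic.sub_int_mul_eq (x := t) k).symm
  set x : ℝ := Real.tan s with hx
  have harc : Real.arctan x = s := Real.arctan_tan hs_gt hs_lt
  set a : ℝ := Real.arctan ((1 + α) * x) with ha
  refine ⟨a - s, ?_, ?_, ?_⟩
  · -- bound
    have hsub : a - s = Real.arctan (α * x / (1 - (1 + α) * x * (-x))) := by
      rw [ha, ← harc, sub_eq_add_neg, ← Real.arctan_neg,
        Real.arctan_add (by nlinarith [sq_nonneg x])]
      congr 1
      ring
    rw [hsub]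
    have hd : (0:ℝ) < 1 - (1 + α) * x * (-x) := by nlinarith [sq_nonneg x]
    have hz : |α * x / (1 - (1 + α) * x * (-x))| ≤ α / 2 := by
      rw [abs_div, abs_of_pos hd, div_le_iff₀ hd, abs_mul, abs_of_pos hα]
      nlinarith [sq_abs x, mul_nonneg hα.le (sq_nonneg (|x| - 1)),
        mul_nonneg (mul_nonneg hα.le hα.le) (sq_nonneg x)]
    calc |Real.arctan _| ≤ _ := abs_arctan_le_abs _
      _ ≤ α / 2 := hz
      _ < π / 2 * α := by nlinarith [Real.pi_gt_three]
  · -- poles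
    intro j hj
    have h1 : -(π/2) < a := Real.neg_pi_div_two_lt_arctan _
    have h2 : a < π/2 := Real.arctan_lt_pi_div_two _
    have hja : a = (j - k : ℤ) * π + π / 2 := by
      push_cast
      simp only [hs] at hj ⊢
      linarith
    rcases le_or_gt 0 (j - k) with hm | hm
    · have hnn : (0:ℝ) ≤ ((j - k : ℤ) : ℝ) * π := by
        have : (0:ℝ) ≤ ((j - k : ℤ) : ℝ) := by exact_mod_cast hm
        positivity
      rw [hja] at h2
      linarith
    · have hm1 : (j - k : ℤ) ≤ -1 := by omega
      have hle : ((j - k : ℤ) : ℝ) * π ≤ -π := by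
        have : ((j - k : ℤ) : ℝ) ≤ -1 := by exact_mod_cast hm1
        nlinarith
      rw [hja] at h1
      linarith
  · -- equation
    have heq : t + (a - s) = a + k * π := by simp only [hs]; ring
    rw [heq, (Real.tan_periodic.int_mul k) a, ha, Real.tan_arctan, hts]
end

section
/- Let α ∈ (0, 1/2). Then for every t ∈ ℝ with tan t defined, there exists y ∈ ℝ with |y| < π·α such that (1−α)·tan t = tan(t−y). -/
/-!
Reduce `t` modulo `π` to `s ∈ (-π/2, π/2)` and take `y = s - arctan ((1 - α) tan s)`. By the
addition formula for `arctan`, `y = arctan (α T / (1 + (1 - α) T²))` with `T = tan s`; since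
`1 - α ≥ 1/2` we have `|T| < 1 + (1 - α) T²`, so `|y| < α < π α`.
-/

open Real Set

namespace Real

theorem cos_ne_zero_iff_ne_int_mul_pi_add_pi_div_two {x : ℝ} :
    cos x ≠ 0 ↔ ∀ k : ℤ, x ≠ k * π + π / 2 := by
  rw [cos_ne_zero_iff]
  refine forall_congr' fun k => ?_
  rw [show (2 * k + 1) * π / 2 = k * π + π / 2 by ring]

theorem exists_sub_int_mul_pi_mem_Ioo {t : ℝ} (ht : cos t ≠ 0) :
    ∃ k : ℤ, t - k * π ∈ Ioo (-(π / 2)) (π / 2) := by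
  set k := toIcoDiv pi_pos (-(π / 2)) t
  set s := toIcoMod pi_pos (-(π / 2)) t
  have hs : s ∈ Ico (-(π / 2)) (-(π / 2) + π) := toIcoMod_mem_Ico _ _ _
  have hts : t - k * π = s := by linarith [self_sub_toIcoMod_eq_mul pi_pos (-(π / 2)) t]
  refine ⟨k, hts ▸ ⟨lt_of_le_of_ne hs.1 fun h => ht ?_, by linarith [hs.2]⟩⟩
  rw [show t = s + k * π by linarith, cos_add_int_mul_pi, ← h, cos_neg, cos_pi_div_two, mul_zero]

theorem abs_arctan_le (x : ℝ) : |arctan x| ≤ |x| := by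
  have of_nonneg : ∀ y, 0 ≤ y → |arctan y| ≤ y := fun y hy => by
    have h0 : 0 ≤ arctan y := arctan_nonneg.2 hy
    rw [abs_of_nonneg h0]
    simpa only [tan_arctan] using le_tan h0 (arctan_lt_pi_div_two y)
  rcases le_total 0 x with hx | hx
  · simpa [abs_of_nonneg hx] using of_nonneg x hx
  · simpa [abs_of_nonpos hx, arctan_neg] using of_nonneg (-x) (by linarith)

theorem arctan_sub_arctan_mul {c : ℝ} (hc : 0 ≤ c) (x : ℝ) :
    arctan x - arctan (c * x) = arctan ((1 - c) * x / (1 + c * x ^ 2)) := by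
  rw [sub_eq_add_neg, ← arctan_neg, arctan_add (by nlinarith [sq_nonneg x])]
  congr 1
  ring

theorem abs_div_one_add_mul_sq_lt_one {c : ℝ} (hc : 1 / 2 ≤ c) (x : ℝ) :
    |x / (1 + c * x ^ 2)| < 1 := by
  have hpos : 0 < 1 + c * x ^ 2 := by positivity
  rw [abs_div, abs_of_pos hpos, div_lt_one hpos]
  nlinarith [sq_nonneg (|x| - 1), sq_abs x]

theorem abs_sub_arctan_one_sub_mul_tan_lt {α s : ℝ} (hα0 : 0 < α) (hα1 : α ≤ 1 / 2)
    (hs : s ∈ Ioo (-(π / 2)) (π / 2)) : |s - arctan ((1 - α) * tan s)| < α := by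
  have hshift := arctan_sub_arctan_mul (c := 1 - α) (by linarith) (tan s)
  rw [arctan_tan hs.1 hs.2, sub_sub_cancel, mul_div_assoc] at hshift
  calc |s - arctan ((1 - α) * tan s)|
      ≤ |α * (tan s / (1 + (1 - α) * tan s ^ 2))| := hshift ▸ abs_arctan_le _
    _ < α := by
      rw [abs_mul, abs_of_pos hα0]
      exact mul_lt_of_lt_one_right hα0 (abs_div_one_add_mul_sq_lt_one (by linarith) _)

end Real

/-- For α ∈ (0, 1/2) and t in the domain of tan, there is y with
|y| < π·α, t−y in the domain of tan, and (1−α)·tan t = tan(t−y). -/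
theorem tan_scale_shift_down (α : ℝ) (hα0 : 0 < α) (hα1 : α < 1/2) (t : ℝ)
    (ht : ∀ k : ℤ, t ≠ k * π + π / 2) :
    ∃ y : ℝ, |y| < π * α ∧ (∀ k : ℤ, t - y ≠ k * π + π / 2) ∧
      (1 - α) * Real.tan t = Real.tan (t - y) := by
  obtain ⟨k, hs⟩ :=
    exists_sub_int_mul_pi_mem_Ioo (cos_ne_zero_iff_ne_int_mul_pi_add_pi_div_two.2 ht)
  set s := t - k * π
  set a := arctan ((1 - α) * tan s)
  have hty : t - (s - a) = a + k * π := by ring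
  refine ⟨s - a, ?_, ?_, ?_⟩
  · calc |s - a| < α := abs_sub_arctan_one_sub_mul_tan_lt hα0 hα1.le hs
      _ < π * α := lt_mul_left hα0 (by linarith [pi_gt_three])
  · rw [← cos_ne_zero_iff_ne_int_mul_pi_add_pi_div_two, hty, cos_add_int_mul_pi]
    exact mul_ne_zero (zpow_ne_zero _ (by norm_num)) (cos_arctan_pos _).ne'
  · rw [hty, tan_add_int_mul_pi, tan_arctan, ← tan_add_int_mul_pi s k, sub_add_cancel]
end

section
/- For every function f : ℝ → ℝ there exists a function y : ℝ → ℝ such that |y(t)| ≤ |f(t)| for all t ∈ ℝ and, for every t in the domain of tan (i.e., t ≠ kπ + π/2), one has f(t) + tan t = tan(t + y(t)) with t + y(t) in the domain of tan. -/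
/-!
Take `y t = arctan (f t + tan t) - arctan (tan t)`. Since `arctan` is 1-Lipschitz,
`|y t| ≤ |f t|`. On the domain of `tan`, `arctan (tan t) = t - n π` for some integer `n`, so
`t + y t = arctan (f t + tan t) + n π`, which lies in the domain of `tan` and has tangent
`f t + tan t` by `π`-periodicity.
-/

open Real

theorem cos_ne_zero_iff_forall_ne_int_mul_pi_add_pi_div_two {θ : ℝ} :
    cos θ ≠ 0 ↔ ∀ k : ℤ, θ ≠ k * π + π / 2 := by
  rw [cos_ne_zero_iff]
  refine forall_congr' fun k => ?_
  rw [show (2 * k + 1) * π / 2 = k * π + π / 2 by ring]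

theorem lipschitzWith_arctan : LipschitzWith 1 arctan := by
  refine lipschitzWith_of_nnnorm_deriv_le differentiableAt_arctan fun x => ?_
  rw [(hasDerivAt_arctan x).deriv, ← NNReal.coe_le_coe, coe_nnnorm, norm_eq_abs,
    NNReal.coe_one, abs_of_pos (by positivity), div_le_one (by positivity)]
  nlinarith [sq_nonneg x]

theorem abs_arctan_sub_arctan_le (a b : ℝ) : |arctan a - arctan b| ≤ |a - b| := by
  simpa [dist_eq] using lipschitzWith_arctan.dist_le_mul a b

theorem cos_arctan_add_int_mul_pi_ne_zero (x : ℝ) (n : ℤ) : cos (arctan x + n * π) ≠ 0 := by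
  rw [cos_add_int_mul_pi]
  exact mul_ne_zero (zpow_ne_zero _ (by norm_num)) (cos_arctan_pos x).ne'

theorem exists_arctan_tan_eq_sub_int_mul_pi {t : ℝ} (ht : cos t ≠ 0) :
    ∃ n : ℤ, arctan (tan t) = t - n * π := by
  obtain ⟨hs_ge, hs_lt⟩ := toIcoMod_mem_Ico pi_pos (-(π / 2)) t
  rw [← self_sub_toIcoDiv_zsmul, zsmul_eq_mul] at hs_ge hs_lt
  set n := toIcoDiv pi_pos (-(π / 2)) t
  have hs_ne : t - n * π ≠ -(π / 2) := by
    intro h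
    have := congrArg cos h
    rw [cos_sub_int_mul_pi, cos_neg, cos_pi_div_two] at this
    exact mul_ne_zero (zpow_ne_zero _ (by norm_num)) ht this
  refine ⟨n, ?_⟩
  rw [← arctan_tan (lt_of_le_of_ne hs_ge hs_ne.symm) (by linarith), tan_sub_int_mul_pi]

/-- For every f : ℝ → ℝ there is y : ℝ → ℝ with |y(t)| ≤ |f(t)| for
all t, and for t in the domain of tan, t + y(t) is in the domain of tan and
f(t) + tan t = tan(t + y(t)). -/
theorem tan_additive_shift (f : ℝ → ℝ) :
    ∃ y : ℝ → ℝ, (∀ t, |y t| ≤ |f t|) ∧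
      ∀ t, (∀ k : ℤ, t ≠ k * π + π / 2) →
        (∀ k : ℤ, t + y t ≠ k * π + π / 2) ∧
        f t + Real.tan t = Real.tan (t + y t) := by
  refine ⟨fun t => arctan (f t + tan t) - arctan (tan t), fun t => ?_, fun t ht => ?_⟩
  · simpa using abs_arctan_sub_arctan_le (f t + tan t) (tan t)
  · obtain ⟨n, hn⟩ := exists_arctan_tan_eq_sub_int_mul_pi
      (cos_ne_zero_iff_forall_ne_int_mul_pi_add_pi_div_two.mpr ht)
    have hshift : t + (arctan (f t + tan t) - arctan (tan t)) = arctan (f t + tan t) + n * π := by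
      rw [hn]; ring
    rw [hshift, tan_add_int_mul_pi, tan_arctan]
    exact ⟨cos_ne_zero_iff_forall_ne_int_mul_pi_add_pi_div_two.mp
      (cos_arctan_add_int_mul_pi_ne_zero _ _), rfl⟩
end

section
/- Let F ∈ C¹(0, ∞) satisfy F(z) ∼ a·z as z → ∞ for some constant a < 0 (i.e., F(z)/(a·z) → 1), and assume inf F' > −∞. Then there exists a nonnegative integer k₀ such that for every integer k ≥ k₀, the equation cot z = F(z) has exactly one solution in the open interval (kπ, (k+1)π). -/
/-!
Since `F(z) ∼ a z` with `a < 0`, `F → -∞`, so for large `k` we have `F ≤ -C` on the whole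
interval `(kπ, (k+1)π)`, where `C > 0` is chosen with `1 + C² > -inf F'`. Existence: `cot - F` is
positive at the midpoint, where `cot` vanishes, and tends to `-∞` at the right endpoint.
Uniqueness: every solution lies where `cot ≤ -C`, which is a subinterval since `cot` decreases,
and there `(cot - F)' = -(1 + cot²) - F' ≤ -(1 + C²) - inf F' < 0`.
-/

open Real Filter Set Topology

namespace Real

theorem sin_ne_zero_of_mem_Ioo {k : ℤ} {z : ℝ} (hz : z ∈ Ioo (k * π) ((k + 1) * π)) :
    sin z ≠ 0 := by
  intro hsin
  obtain ⟨n, rfl⟩ := sin_eq_zero_iff.1 hsin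
  have hk : (k : ℝ) < n := lt_of_mul_lt_mul_right hz.1 pi_pos.le
  have hk' : (n : ℝ) < k + 1 := lt_of_mul_lt_mul_right hz.2 pi_pos.le
  norm_cast at hk hk'
  omega

theorem hasDerivAt_cot {x : ℝ} (h : sin x ≠ 0) : HasDerivAt cot (-(1 + cot x ^ 2)) x := by
  have hcot : cot = fun x => cos x / sin x := funext fun _ => cot_eq_cos_div_sin _
  rw [hcot]
  refine ((hasDerivAt_cos x).div (hasDerivAt_sin x) h).congr_deriv ?_
  field_simp
  ring

theorem strictAntiOn_cot (k : ℤ) : StrictAntiOn cot (Ioo (k * π) ((k + 1) * π)) :=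
  strictAntiOn_of_hasDerivWithinAt_neg (convex_Ioo _ _)
    (fun z hz => (hasDerivAt_cot (sin_ne_zero_of_mem_Ioo hz)).continuousAt.continuousWithinAt)
    (fun z hz => (hasDerivAt_cot (sin_ne_zero_of_mem_Ioo (interior_subset hz))).hasDerivWithinAt)
    (fun z _ => neg_neg_of_pos (by positivity))

theorem cot_eq_tan_int_add_half_mul_pi_sub (k : ℤ) (x : ℝ) :
    cot x = tan ((k + 1 / 2) * π - x) := by
  rw [← tan_inv_eq_cot, ← tan_pi_div_two_sub, ← tan_add_int_mul_pi _ k]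
  ring_nf

theorem tendsto_cot_nhdsLT (k : ℤ) : Tendsto cot (𝓝[<] ((k + 1) * π)) atBot := by
  have hmap :
      Tendsto (fun x => (k + 1 / 2) * π - x) (𝓝[<] ((k + 1) * π)) (𝓝[>] (-(π / 2))) := by
    refine tendsto_nhdsWithin_iff.2 ⟨?_, eventually_nhdsWithin_of_forall fun x hx => ?_⟩
    · refine ((continuous_const.sub continuous_id).tendsto' _ _ ?_).mono_left nhdsWithin_le_nhds
      simp only [Pi.sub_apply, id]
      ring
    · simp only [mem_Ioi, mem_Iio] at hx ⊢
      linarith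
  exact (tendsto_tan_neg_pi_div_two.comp hmap).congr fun x =>
    (cot_eq_tan_int_add_half_mul_pi_sub k x).symm

theorem cot_int_add_half_mul_pi (k : ℤ) : cot ((k + 1 / 2) * π) = 0 := by
  rw [cot_eq_tan_int_add_half_mul_pi_sub k, sub_self, tan_zero]

end Real

theorem exists_eq_of_lt_of_tendsto_atBot {α δ : Type*} [ConditionallyCompleteLinearOrder α]
    [TopologicalSpace α] [OrderTopology α] [DenselyOrdered α]
    [LinearOrder δ] [TopologicalSpace δ] [OrderClosedTopology δ] [NoMinOrder δ]
    {g : α → δ} {p u : α} {c : δ} (hpu : p < u)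
    (hg : ContinuousOn g (Ico p u)) (hp : c < g p) (hu : Tendsto g (𝓝[<] u) atBot) :
    ∃ z ∈ Ioo p u, g z = c := by
  have := nhdsLT_neBot_of_exists_lt ⟨p, hpu⟩
  obtain ⟨q, hgq, hq⟩ := ((hu.eventually_lt_atBot c).and (Ioo_mem_nhdsLT hpu)).exists
  obtain ⟨z, hz, hgz⟩ :=
    intermediate_value_Ioo' hq.1.le (hg.mono (Icc_subset_Ico_right hq.2)) ⟨hgq, hp⟩
  exact ⟨z, ⟨hz.1, hz.2.trans hq.2⟩, hgz⟩

section CotEq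

variable {F : ℝ → ℝ} {k : ℤ}

theorem exists_cot_eq (hF : ContinuousOn F (Ioc (k * π) ((k + 1) * π)))
    (hmid : F ((k + 1 / 2) * π) < 0) : ∃ z ∈ Ioo (k * π) ((k + 1) * π), cot z = F z := by
  have hpi := pi_pos
  have hmid_lt : (k + 1 / 2) * π < (k + 1) * π := by linarith
  have hlt : k * π < (k + 1) * π := by linarith
  have hIco : Ico ((k + 1 / 2) * π) ((k + 1) * π) ⊆ Ioo (k * π) ((k + 1) * π) :=
    fun z hz => ⟨by linarith [hz.1], hz.2⟩
  have hcont : ContinuousOn (fun z => cot z - F z) (Ico ((k + 1 / 2) * π) ((k + 1) * π)) :=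
    fun z hz =>
      (hasDerivAt_cot (sin_ne_zero_of_mem_Ioo (hIco hz))).continuousAt.continuousWithinAt.sub
        (hF.mono (Ioo_subset_Ioc_self.trans' hIco) z hz)
  have hF_lim : Tendsto F (𝓝[<] ((k + 1) * π)) (𝓝 (F ((k + 1) * π))) := by
    rw [← nhdsWithin_Ioo_eq_nhdsLT hlt]
    exact (hF _ (right_mem_Ioc.2 hlt)).mono_left (nhdsWithin_mono _ Ioo_subset_Ioc_self)
  obtain ⟨z, hz, hz0⟩ := exists_eq_of_lt_of_tendsto_atBot (c := 0) hmid_lt hcont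
    (by simp only [cot_int_add_half_mul_pi]; linarith)
    (by simpa only [sub_eq_add_neg] using (tendsto_cot_nhdsLT k).atBot_add hF_lim.neg)
  exact ⟨z, hIco (Ioo_subset_Ico_self hz), sub_eq_zero.1 hz0⟩

theorem strictAntiOn_cot_sub {m C : ℝ}
    (hF : DifferentiableOn ℝ F (Ioo (k * π) ((k + 1) * π)))
    (hm : ∀ z ∈ Ioo (k * π) ((k + 1) * π), m ≤ deriv F z)
    (hC : 0 ≤ C) (hmC : -m < 1 + C ^ 2) :
    StrictAntiOn (fun z => cot z - F z) {z ∈ Ioo (k * π) ((k + 1) * π) | cot z ≤ -C} := by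
  set S := {z ∈ Ioo (k * π) ((k + 1) * π) | cot z ≤ -C}
  have hS : S.OrdConnected := ⟨fun x hx y hy z hz => by
    have hzI : z ∈ Ioo (k * π) ((k + 1) * π) := ⟨hx.1.1.trans_le hz.1, hz.2.trans_lt hy.1.2⟩
    exact ⟨hzI, ((strictAntiOn_cot k).antitoneOn hx.1 hzI hz.1).trans hx.2⟩⟩
  have hderiv : ∀ z ∈ S, HasDerivAt (fun z => cot z - F z) (-(1 + cot z ^ 2) - deriv F z) z :=
    fun z hz => (hasDerivAt_cot (sin_ne_zero_of_mem_Ioo hz.1)).sub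
      (hF.differentiableAt (isOpen_Ioo.mem_nhds hz.1)).hasDerivAt
  refine strictAntiOn_of_hasDerivWithinAt_neg hS.convex
    (fun z hz => (hderiv z hz).continuousAt.continuousWithinAt)
    (fun z hz => (hderiv z (interior_subset hz)).hasDerivWithinAt) fun z hz => ?_
  obtain ⟨hzI, hzC⟩ := interior_subset hz
  nlinarith [hm z hzI, hzC]

theorem existsUnique_cot_eq {m C : ℝ}
    (hF : DifferentiableOn ℝ F (Ioc (k * π) ((k + 1) * π)))
    (hm : ∀ z ∈ Ioo (k * π) ((k + 1) * π), m ≤ deriv F z)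
    (hFC : ∀ z ∈ Ioo (k * π) ((k + 1) * π), F z ≤ -C) (hC : 0 < C) (hmC : -m < 1 + C ^ 2) :
    ∃! z, z ∈ Ioo (k * π) ((k + 1) * π) ∧ cot z = F z := by
  have hmid : (k + 1 / 2) * π ∈ Ioo (k * π) ((k + 1) * π) :=
    ⟨by linarith [pi_pos], by linarith [pi_pos]⟩
  obtain ⟨z, hz, hzF⟩ :=
    exists_cot_eq hF.continuousOn ((hFC _ hmid).trans_lt (neg_neg_of_pos hC))
  refine ⟨z, ⟨hz, hzF⟩, fun y ⟨hy, hyF⟩ => ?_⟩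
  refine (strictAntiOn_cot_sub (hF.mono Ioo_subset_Ioc_self) hm hC.le hmC).injOn
    ⟨hy, hyF ▸ hFC y hy⟩ ⟨hz, hzF ▸ hFC z hz⟩ ?_
  simp only [hyF, hzF, sub_self]

end CotEq

/-- If F ∈ C¹(0,∞), F(z) ∼ a·z as z → ∞ with a < 0, and inf F' > −∞,
then there is k₀ such that for every k ≥ k₀ the equation cot z = F(z) has a
unique solution in (kπ, (k+1)π). -/
theorem cot_eq_unique_solution (F : ℝ → ℝ) (a : ℝ) (ha : a < 0)
    (hC1 : ContDiffOn ℝ 1 F (Set.Ioi 0))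
    (hasymp : Tendsto (fun z => F z / (a * z)) atTop (nhds 1))
    (hinf : ∃ m : ℝ, ∀ z > 0, m ≤ deriv F z) :
    ∃ k₀ : ℕ, ∀ k : ℕ, k₀ ≤ k →
      ∃! z : ℝ, z ∈ Set.Ioo ((k : ℝ) * π) (((k : ℝ) + 1) * π) ∧ Real.cot z = F z := by
  obtain ⟨m, hm⟩ := hinf
  have hF : Tendsto F atTop atBot :=
    (Asymptotics.isEquivalent_of_tendsto_one hasymp).symm.tendsto_atBot
      (tendsto_id.const_mul_atTop_of_neg ha)
  obtain ⟨T, hT⟩ := eventually_atTop.1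
    ((hF.eventually_le_atBot (-(|m| + 1))).and (eventually_gt_atTop 0))
  have hkπ : Tendsto (fun k : ℕ => (k : ℝ) * π) atTop atTop :=
    tendsto_natCast_atTop_atTop.atTop_mul_const pi_pos
  obtain ⟨k₀, hk₀⟩ := (hkπ.eventually_ge_atTop T).exists_forall_of_atTop
  refine ⟨k₀, fun k hk => ?_⟩
  have hlarge : ∀ z, ((k : ℤ) : ℝ) * π < z → F z ≤ -(|m| + 1) ∧ 0 < z := fun z hz =>
    hT z ((hk₀ k hk).trans (by exact_mod_cast hz.le))
  simpa only [Int.cast_natCast] using existsUnique_cot_eq (k := k)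
    ((hC1.differentiableOn one_ne_zero).mono fun z hz => (hlarge z hz.1).2)
    (fun z hz => hm z (hlarge z hz.1).2) (fun z hz => (hlarge z hz.1).1) (by positivity)
    (by nlinarith [abs_nonneg m, neg_le_abs m])
end

section
/- Let φ : [t₀, ∞) → ℝ be a continuous function, t₀ > 0, such that tan φ(t) = tan(χ(t) + ε(t)) for all t, where χ(t) = t − (ν/2 + 1/4)π and ε(t) = O(t^{−1}) as t → ∞. Then there exists a unique integer k such that φ(t) = χ(t) + kπ + O(t^{−1}) as t → ∞. -/
/-!
Write `φ t - χ t = ε t + m t * π` with `m t ∈ ℤ`. Once `|ε t| < π / 2`, the continuous function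
`φ - χ` stays within `π / 2` of the multiple `m t * π`; to pass from the band around one multiple
of `π` to the band around another it would have to take a value `(j + 1/2) * π` in between, which
is at distance `π / 2` from every multiple. Hence `m` is eventually constant, and the constant is
unique because two multiples of `π` within `π / 2` of the same number coincide.
-/

open Real Filter Set

theorem eq_of_abs_sub_intCast_mul_lt {a p : ℝ} {m n : ℤ}
    (hm : |a - m * p| < p / 2) (hn : |a - n * p| < p / 2) : m = n := by
  have hp : 0 < p := by linarith [abs_nonneg (a - m * p)]
  have hmn : (m : ℝ) * p < (n + 1) * p := by linarith [(abs_lt.1 hm).1, (abs_lt.1 hn).2]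
  have hnm : (n : ℝ) * p < (m + 1) * p := by linarith [(abs_lt.1 hm).2, (abs_lt.1 hn).1]
  have h₁ : m < n + 1 := by exact_mod_cast lt_of_mul_lt_mul_right hmn hp.le
  have h₂ : n < m + 1 := by exact_mod_cast lt_of_mul_lt_mul_right hnm hp.le
  omega

theorem IsPreconnected.eq_of_abs_sub_intCast_mul_lt {S : Set ℝ} {f : ℝ → ℝ} {p : ℝ}
    (hS : IsPreconnected S) (hf : ContinuousOn f S)
    (hnear : ∀ t ∈ S, ∃ j : ℤ, |f t - j * p| < p / 2)
    {x y : ℝ} (hx : x ∈ S) (hy : y ∈ S) {m n : ℤ}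
    (hm : |f x - m * p| < p / 2) (hn : |f y - n * p| < p / 2) : m = n := by
  wlog hlt : m < n generalizing x y m n
  · rcases (not_lt.1 hlt).lt_or_eq with h | h
    · exact (this hy hx hn hm h).symm
    · exact h.symm
  exfalso
  have hp : 0 < p := by linarith [abs_nonneg (f x - m * p)]
  have hmn : ((m : ℝ) + 1) * p ≤ n * p :=
    mul_le_mul_of_nonneg_right (by exact_mod_cast hlt) hp.le
  obtain ⟨z, hz, hfz⟩ := hS.intermediate_value hx hy hf
    (show (m + 1 / 2) * p ∈ Icc (f x) (f y) by
      constructor <;> linarith [(abs_lt.1 hm).2, (abs_lt.1 hn).1])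
  obtain ⟨j, hj⟩ := hnear z hz
  rw [hfz] at hj
  have h₁ : (m : ℝ) * p < j * p := by linarith [(abs_lt.1 hj).2]
  have h₂ : (j : ℝ) * p < (m + 1) * p := by linarith [(abs_lt.1 hj).1]
  have h₁' : m < j := by exact_mod_cast lt_of_mul_lt_mul_right h₁ hp.le
  have h₂' : j < m + 1 := by exact_mod_cast lt_of_mul_lt_mul_right h₂ hp.le
  omega

theorem eventually_div_lt_atTop (C : ℝ) {δ : ℝ} (hδ : 0 < δ) : ∀ᶠ t in atTop, C / t < δ :=
  (tendsto_const_nhds.div_atTop tendsto_id).eventually (gt_mem_nhds hδ)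

/-- If φ is continuous on [t₀,∞) and tan φ(t) = tan(χ(t) + ε(t)),
i.e. φ(t) and χ(t) + ε(t) differ by an integer multiple of π, where
χ(t) = t − (ν/2 + 1/4)π and ε(t) = O(t⁻¹), then there is a unique integer k
with φ(t) = χ(t) + kπ + O(t⁻¹) as t → ∞. -/
theorem phase_from_tan (t₀ ν : ℝ) (ht₀ : 0 < t₀) (φ ε : ℝ → ℝ)
    (hφ : ContinuousOn φ (Set.Ici t₀))
    (hε : ∃ C : ℝ, ∀ t ≥ t₀, |ε t| ≤ C / t)
    (htan : ∀ t ≥ t₀, ∃ m : ℤ,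
      φ t = (t - (ν / 2 + 1 / 4) * π) + ε t + m * π) :
    ∃! k : ℤ, ∃ C > 0, ∀ᶠ t in atTop,
      |φ t - ((t - (ν / 2 + 1 / 4) * π) + k * π)| ≤ C / t := by
  obtain ⟨C₀, hC₀⟩ := hε
  set C := max C₀ 1
  have hεC : ∀ t ≥ t₀, |ε t| ≤ C / t := fun t ht =>
    (hC₀ t ht).trans (div_le_div_of_nonneg_right (le_max_left _ _) (ht₀.trans_le ht).le)
  choose! m hm using htan
  have hdev : ∀ t ≥ t₀, φ t - (t - (ν / 2 + 1 / 4) * π) - m t * π = ε t := fun t ht => by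
    rw [hm t ht]; ring
  obtain ⟨T, hT⟩ := eventually_atTop.1
    ((eventually_ge_atTop t₀).and (eventually_div_lt_atTop C (half_pos pi_pos)))
  have hnear : ∀ t ≥ T, |φ t - (t - (ν / 2 + 1 / 4) * π) - m t * π| < π / 2 := fun t ht => by
    rw [hdev t (hT t ht).1]
    exact (hεC t (hT t ht).1).trans_lt (hT t ht).2
  have hcont : ContinuousOn (fun t => φ t - (t - (ν / 2 + 1 / 4) * π)) (Ici T) :=
    (hφ.mono (Ici_subset_Ici.2 (hT T le_rfl).1)).sub (by fun_prop)
  have hm_const : ∀ t ≥ T, m t = m T := fun t ht =>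
    isPreconnected_Ici.eq_of_abs_sub_intCast_mul_lt hcont (fun s hs => ⟨m s, hnear s hs⟩)
      ht self_mem_Ici (hnear t ht) (hnear T le_rfl)
  simp only [← sub_sub]
  refine ⟨m T, ⟨C, by positivity, ?_⟩, ?_⟩
  · filter_upwards [eventually_ge_atTop T] with t ht
    rw [← hm_const t ht, hdev t (hT t ht).1]
    exact hεC t (hT t ht).1
  · rintro k ⟨C', -, hk⟩
    obtain ⟨t, hkt, hC't, htT⟩ :=
      (hk.and ((eventually_div_lt_atTop C' (half_pos pi_pos)).and (eventually_ge_atTop T))).exists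
    exact eq_of_abs_sub_intCast_mul_lt (hkt.trans_lt hC't) (hm_const t htT ▸ hnear t htT)
end

section
/- Let μ ∈ (0,2), ν ∈ ℝ, τ₀ > 0, let x(t) = 𝐽̃_{ν,μ}(t) = t^{(μ−1)/2} J_{ν̃}(t) with ν̃ = sqrt(((μ−1)/2)² + ν²), and let r(t) = sqrt(x(t)² + x'(t)²). Then r(t)² = (2/π)·t^{μ−2} + O(t^{μ−3}) as t → ∞; in particular r(t) ≍ t^{−(2−μ)/2} as t → ∞ (i.e., there are positive constants C, D with C·t^{−(2−μ)/2} ≤ r(t) ≤ D·t^{−(2−μ)/2} for all large t). -/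
/-!
Put `a = (μ - 1) / 2` and let `χ` be the Hankel phase. The Hankel forms give
`x = t^a √(2/(πt)) u` and `x' = t^a √(2/(πt)) v` with `u = cos χ + O(1/t)` and
`v = -sin χ + O(1/t)` (the term `a t^(a-1) J` in `x'` only contributes `a u / t` to `v`).
Hence `x² + x'² = (2/π) t^(μ-2) (u² + v²)`, and `u² + v² = 1 + O(1/t)` because
`cos² χ + sin² χ = 1`. The error `t^(μ-3)` is negligible against `t^(μ-2)`, so `r²` is
eventually pinched between two positive multiples of `t^(μ-2)`; taking square roots gives
`r ≍ t^(-(2-μ)/2)`.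
-/

open Real Filter Asymptotics

section
variable {α : Type*} {l : Filter α}

theorem isBigO_sq_add_sq_sub_one {c s p q g : α → ℝ} (hcs : ∀ x, c x ^ 2 + s x ^ 2 = 1)
    (hg : g =O[l] fun _ => (1 : ℝ)) (hp : (fun x => p x - c x) =O[l] g)
    (hq : (fun x => q x + s x) =O[l] g) :
    (fun x => p x ^ 2 + q x ^ 2 - 1) =O[l] g := by
  have hc : c =O[l] fun _ => (1 : ℝ) := isBigO_of_le _ fun x => by
    rw [norm_one, norm_eq_abs, ← sq_le_one_iff_abs_le_one]
    nlinarith [hcs x, sq_nonneg (s x)]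
  have hs : s =O[l] fun _ => (1 : ℝ) := isBigO_of_le _ fun x => by
    rw [norm_one, norm_eq_abs, ← sq_le_one_iff_abs_le_one]
    nlinarith [hcs x, sq_nonneg (c x)]
  -- `p + c = (p - c) + 2c` and `q - s = (q + s) - 2s` are bounded, and `c² + s² = 1`.
  have hp' : (fun x => (p x - c x) * (p x - c x + 2 * c x)) =O[l] g := by
    simpa using hp.mul ((hp.trans hg).add (hc.const_mul_left 2))
  have hq' : (fun x => (q x + s x) * (q x + s x - 2 * s x)) =O[l] g := by
    simpa using hq.mul ((hq.trans hg).sub (hs.const_mul_left 2))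
  refine (hp'.add hq').congr_left fun x => ?_
  linear_combination -hcs x

theorem eventually_sqrt_mul_sqrt_le_and_le_of_isLittleO {r g : α → ℝ} {A : ℝ} (hA : 0 < A)
    (hr : ∀ᶠ x in l, 0 ≤ r x) (hg : ∀ᶠ x in l, 0 ≤ g x)
    (h : (fun x => r x ^ 2 - A * g x) =o[l] g) :
    ∀ᶠ x in l, √(A / 2) * √(g x) ≤ r x ∧ r x ≤ √(3 * A / 2) * √(g x) := by
  filter_upwards [hr, hg, h.bound (half_pos hA)] with x hrx hgx hx
  rw [norm_eq_abs, norm_of_nonneg hgx, abs_le] at hx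
  rw [← sqrt_mul' _ hgx, ← sqrt_mul' _ hgx]
  constructor
  · calc √(A / 2 * g x) ≤ √(r x ^ 2) := sqrt_le_sqrt (by linarith)
      _ = r x := sqrt_sq hrx
  · calc r x = √(r x ^ 2) := (sqrt_sq hrx).symm
      _ ≤ √(3 * A / 2 * g x) := sqrt_le_sqrt (by linarith)

end

theorem isBigO_rpow_atTop_iff {f : ℝ → ℝ} {k : ℝ} :
    f =O[atTop] (fun t => t ^ k) ↔ ∃ C, ∀ᶠ t in atTop, |f t| ≤ C * t ^ k := by
  rw [isBigO_iff]
  refine exists_congr fun C => eventually_congr ?_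
  filter_upwards [eventually_ge_atTop 0] with t ht
  rw [norm_eq_abs, norm_of_nonneg (rpow_nonneg ht k)]

theorem isBigO_rpow_rpow_atTop_of_le {a b : ℝ} (hab : a ≤ b) :
    (fun t : ℝ => t ^ a) =O[atTop] fun t => t ^ b := by
  refine isBigO_rpow_atTop_iff.2 ⟨1, ?_⟩
  filter_upwards [eventually_ge_atTop 1] with t ht
  rw [one_mul, abs_of_nonneg (rpow_nonneg (by linarith) a)]
  exact rpow_le_rpow_of_exponent_le ht hab

theorem isLittleO_rpow_rpow_atTop_of_lt {a b : ℝ} (hab : a < b) :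
    (fun t : ℝ => t ^ a) =o[atTop] fun t => t ^ b := by
  have hdecay : (fun t : ℝ => t ^ (-(b - a))) =o[atTop] fun _ => (1 : ℝ) :=
    (isLittleO_one_iff ℝ).2 (tendsto_rpow_neg_atTop (by linarith))
  refine ((isBigO_refl (fun t : ℝ => t ^ b) atTop).mul_isLittleO hdecay).congr' ?_ (by simp)
  filter_upwards [eventually_gt_atTop 0] with t ht
  rw [← rpow_add ht]
  ring_nf

theorem sq_add_sq_of_hankel_form {a t : ℝ} (ht : 0 < t) (u y : ℝ) :
    (t ^ a * (√(2 / (π * t)) * u)) ^ 2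
        + (a * t ^ (a - 1) * (√(2 / (π * t)) * u) + t ^ a * (√(2 / (π * t)) * y)) ^ 2
      = 2 / π * t ^ (2 * a - 1) * (u ^ 2 + (a / t * u + y) ^ 2) := by
  have hw : √(2 / (π * t)) ^ 2 = 2 / (π * t) := sq_sqrt (by positivity)
  have hpow : t ^ (2 * a - 1) = t ^ a * t ^ a / t := by
    rw [rpow_sub_one ht.ne', two_mul, rpow_add ht]
  rw [rpow_sub_one ht.ne', hpow]
  field_simp
  rw [hw]
  field_simp

theorem isBigO_hankel_sq_add_sq_sub_one {P Q R S θ : ℝ → ℝ} (a : ℝ)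
    (hP : (fun t => P t - 1) =O[atTop] fun t => t ^ (-1 : ℝ))
    (hQ : Q =O[atTop] fun t => t ^ (-1 : ℝ))
    (hR : (fun t => R t - 1) =O[atTop] fun t => t ^ (-1 : ℝ))
    (hS : S =O[atTop] fun t => t ^ (-1 : ℝ)) :
    (fun t => (P t * cos (θ t) - Q t * sin (θ t)) ^ 2
        + (a / t * (P t * cos (θ t) - Q t * sin (θ t))
            + (-R t * sin (θ t) - S t * cos (θ t))) ^ 2 - 1)
      =O[atTop] fun t => t ^ (-1 : ℝ) := by
  have hdecay : (fun t : ℝ => t ^ (-1 : ℝ)) =O[atTop] fun _ => (1 : ℝ) :=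
    (tendsto_rpow_neg_atTop one_pos).isBigO_one ℝ
  have hcos : (fun t => cos (θ t)) =O[atTop] fun _ => (1 : ℝ) :=
    isBigO_of_le _ fun t => by simpa using abs_cos_le_one (θ t)
  have hsin : (fun t => sin (θ t)) =O[atTop] fun _ => (1 : ℝ) :=
    isBigO_of_le _ fun t => by simpa using abs_sin_le_one (θ t)
  have hu : (fun t => P t * cos (θ t) - Q t * sin (θ t) - cos (θ t)) =O[atTop]
      fun t => t ^ (-1 : ℝ) := by
    have h := (hP.mul hcos).sub (hQ.mul hsin)
    simp only [mul_one] at h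
    exact h.congr_left fun t => by ring
  have ha : (fun t : ℝ => a / t) =O[atTop] fun t => t ^ (-1 : ℝ) :=
    (isBigO_const_mul_self a _ atTop).congr_left fun t => by rw [rpow_neg_one, div_eq_mul_inv]
  have hv : (fun t => a / t * (P t * cos (θ t) - Q t * sin (θ t))
      + (-R t * sin (θ t) - S t * cos (θ t)) + sin (θ t)) =O[atTop] fun t => t ^ (-1 : ℝ) := by
    have h := (ha.mul ((hu.trans hdecay).add hcos)).sub ((hR.mul hsin).add (hS.mul hcos))
    simp only [mul_one] at h
    exact h.congr_left fun t => by ring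
  exact isBigO_sq_add_sq_sub_one (fun t => cos_sq_add_sin_sq (θ t)) hdecay hu hv

theorem isBigO_phase_radius_sq_sub {μ : ℝ} {θ J J' P Q R S x x' : ℝ → ℝ}
    (hJ : ∀ t > (0 : ℝ), J t = √(2 / (π * t)) * (P t * cos (θ t) - Q t * sin (θ t)))
    (hJ' : ∀ t > (0 : ℝ), J' t = √(2 / (π * t)) * (-R t * sin (θ t) - S t * cos (θ t)))
    (hP : (fun t => P t - 1) =O[atTop] fun t => t ^ (-1 : ℝ))
    (hQ : Q =O[atTop] fun t => t ^ (-1 : ℝ))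
    (hR : (fun t => R t - 1) =O[atTop] fun t => t ^ (-1 : ℝ))
    (hS : S =O[atTop] fun t => t ^ (-1 : ℝ))
    (hx : ∀ t > (0 : ℝ), x t = t ^ ((μ - 1) / 2) * J t)
    (hx' : ∀ t > (0 : ℝ), x' t = (μ - 1) / 2 * t ^ ((μ - 3) / 2) * J t
      + t ^ ((μ - 1) / 2) * J' t) :
    (fun t => x t ^ 2 + x' t ^ 2 - 2 / π * t ^ (μ - 2)) =O[atTop] fun t => t ^ (μ - 3) := by
  have hsq := isBigO_hankel_sq_add_sq_sub_one (θ := θ) ((μ - 1) / 2) hP hQ hR hS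
  have hprod := ((isBigO_refl (fun t : ℝ => t ^ (μ - 2)) atTop).mul hsq).const_mul_left (2 / π)
  refine hprod.congr' ?_ ?_
  · filter_upwards [eventually_gt_atTop 0] with t ht
    rw [hx' t ht, hx t ht, hJ t ht, hJ' t ht, show (μ - 3) / 2 = (μ - 1) / 2 - 1 by ring,
      sq_add_sq_of_hankel_form ht, show 2 * ((μ - 1) / 2) - 1 = μ - 2 by ring]
    ring
  · filter_upwards [eventually_gt_atTop 0] with t ht
    rw [← rpow_add ht]
    ring_nf

theorem generalized_Bessel_radius_asymptotics_general (μ : ℝ) (νt : ℝ)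
    (J J' P Q R S : ℝ → ℝ)
    (hJ : ∀ t > (0:ℝ), J t = Real.sqrt (2 / (π * t)) *
      (P t * Real.cos (t - (νt / 2 + 1 / 4) * π) - Q t * Real.sin (t - (νt / 2 + 1 / 4) * π)))
    (hJ' : ∀ t > (0:ℝ), J' t = Real.sqrt (2 / (π * t)) *
      (- R t * Real.sin (t - (νt / 2 + 1 / 4) * π) - S t * Real.cos (t - (νt / 2 + 1 / 4) * π)))
    (hP : ∃ C : ℝ, ∀ᶠ t : ℝ in atTop, |P t - 1| ≤ C * t ^ (-2 : ℝ))
    (hQ : ∃ C : ℝ, ∀ᶠ t : ℝ in atTop, |Q t| ≤ C * t ^ (-1 : ℝ))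
    (hR : ∃ C : ℝ, ∀ᶠ t : ℝ in atTop, |R t - 1| ≤ C * t ^ (-2 : ℝ))
    (hS : ∃ C : ℝ, ∀ᶠ t : ℝ in atTop, |S t| ≤ C * t ^ (-1 : ℝ))
    (x x' r : ℝ → ℝ)
    (hx : ∀ t > (0:ℝ), x t = t ^ ((μ - 1) / 2) * J t)
    (hx' : ∀ t > (0:ℝ), x' t = ((μ - 1) / 2) * t ^ ((μ - 3) / 2) * J t
      + t ^ ((μ - 1) / 2) * J' t)
    (hr : ∀ t, r t = Real.sqrt (x t ^ 2 + x' t ^ 2)) :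
    (∃ C : ℝ, ∀ᶠ t : ℝ in atTop, |r t ^ 2 - (2 / π) * t ^ (μ - 2)| ≤ C * t ^ (μ - 3)) ∧
    (∃ C D : ℝ, 0 < C ∧ 0 < D ∧ ∀ᶠ t : ℝ in atTop,
      C * t ^ (-(2 - μ) / 2) ≤ r t ∧ r t ≤ D * t ^ (-(2 - μ) / 2)) := by
  have hweaken := isBigO_rpow_rpow_atTop_of_le (show (-2 : ℝ) ≤ -1 by norm_num)
  have hr_sq : ∀ t, r t ^ 2 = x t ^ 2 + x' t ^ 2 := fun t => by
    rw [hr, sq_sqrt (by positivity)]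
  have hsq : (fun t => r t ^ 2 - 2 / π * t ^ (μ - 2)) =O[atTop] fun t => t ^ (μ - 3) := by
    simpa only [hr_sq] using isBigO_phase_radius_sq_sub hJ hJ'
      ((isBigO_rpow_atTop_iff.2 hP).trans hweaken) (isBigO_rpow_atTop_iff.2 hQ)
      ((isBigO_rpow_atTop_iff.2 hR).trans hweaken) (isBigO_rpow_atTop_iff.2 hS) hx hx'
  refine ⟨isBigO_rpow_atTop_iff.1 hsq, √(2 / π / 2), √(3 * (2 / π) / 2), by positivity,
    by positivity, ?_⟩
  have hbounds := eventually_sqrt_mul_sqrt_le_and_le_of_isLittleO (by positivity)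
    (Eventually.of_forall fun t => (hr t).symm ▸ sqrt_nonneg _)
    (eventually_ge_atTop 0 |>.mono fun t ht => rpow_nonneg ht (μ - 2))
    (hsq.trans_isLittleO (isLittleO_rpow_rpow_atTop_of_lt (by linarith)))
  filter_upwards [hbounds, eventually_ge_atTop 0] with t ht ht0
  have hroot : √(t ^ (μ - 2)) = t ^ (-(2 - μ) / 2) := by
    rw [sqrt_eq_rpow, ← rpow_mul ht0]
    ring_nf
  rwa [hroot] at ht

/-- For x(t) = t^((μ−1)/2) J_ν̃(t), μ ∈ (0,2), where J_ν̃ has the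
Hankel asymptotic expansion (hypotheses hJ–hS below), the phase radius
r(t) = sqrt(x(t)² + x'(t)²) satisfies r(t)² = (2/π)·t^(μ−2) + O(t^(μ−3)) and
hence r(t) ≍ t^(−(2−μ)/2) as t → ∞. -/
theorem generalized_Bessel_radius_asymptotics (μ ν τ₀ : ℝ)
    (hμ : μ ∈ Set.Ioo (0 : ℝ) 2) (hτ₀ : 0 < τ₀)
    (νt : ℝ) (hνt : νt = Real.sqrt (((μ - 1) / 2) ^ 2 + ν ^ 2))
    (J J' P Q R S : ℝ → ℝ)
    (hderiv : ∀ t > (0:ℝ), HasDerivAt J (J' t) t)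
    (hJ : ∀ t > (0:ℝ), J t = Real.sqrt (2 / (π * t)) *
      (P t * Real.cos (t - (νt / 2 + 1 / 4) * π) - Q t * Real.sin (t - (νt / 2 + 1 / 4) * π)))
    (hJ' : ∀ t > (0:ℝ), J' t = Real.sqrt (2 / (π * t)) *
      (- R t * Real.sin (t - (νt / 2 + 1 / 4) * π) - S t * Real.cos (t - (νt / 2 + 1 / 4) * π)))
    (hP : ∃ C : ℝ, ∀ᶠ t : ℝ in atTop, |P t - 1| ≤ C * t ^ (-2 : ℝ))
    (hQ : ∃ C : ℝ, ∀ᶠ t : ℝ in atTop, |Q t| ≤ C * t ^ (-1 : ℝ))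
    (hR : ∃ C : ℝ, ∀ᶠ t : ℝ in atTop, |R t - 1| ≤ C * t ^ (-2 : ℝ))
    (hS : ∃ C : ℝ, ∀ᶠ t : ℝ in atTop, |S t| ≤ C * t ^ (-1 : ℝ))
    (x x' r : ℝ → ℝ)
    (hx : ∀ t > (0:ℝ), x t = t ^ ((μ - 1) / 2) * J t)
    (hx' : ∀ t > (0:ℝ), x' t = ((μ - 1) / 2) * t ^ ((μ - 3) / 2) * J t
      + t ^ ((μ - 1) / 2) * J' t)
    (hr : ∀ t, r t = Real.sqrt (x t ^ 2 + x' t ^ 2)) :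
    (∃ C : ℝ, ∀ᶠ t : ℝ in atTop, |r t ^ 2 - (2 / π) * t ^ (μ - 2)| ≤ C * t ^ (μ - 3)) ∧
    (∃ C D : ℝ, 0 < C ∧ 0 < D ∧ ∀ᶠ t : ℝ in atTop,
      C * t ^ (-(2 - μ) / 2) ≤ r t ∧ r t ≤ D * t ^ (-(2 - μ) / 2)) :=
  generalized_Bessel_radius_asymptotics_general μ νt J J' P Q R S hJ hJ' hP hQ hR hS x x' r hx hx'
    hr
end
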